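/- arXiv:2008.03368 — 8 statements merged into one kernel-verified Lean document; each statement's English description precedes it below -/
import Mathlib

section
/- Let A be a real m×n matrix with columns F₁,…,Fₙ, let A⁺ be a Moore–Penrose pseudoinverse of A, and set S = Iₙ − A⁺·A. Then for every index j, the following are equivalent: (1) F_j does not lie in the linear span of the other columns {F_i : i ≠ j}; (2) every x ∈ ℝⁿ with A·x = 0 satisfies x_j = 0; (3) the j-th row of S is zero, i.e., e_jᵀ·S = 0; (4) the diagonal entry S_{j,j} equals 0. -/
/-!
The columns of `S = I - A⁺A` lie in the null space of `A`, and `S` fixes every null vector, so the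
`j`-th coordinates of null vectors vanish iff the `j`-th row of `S` does. Since `S` is a symmetric
idempotent, `S j j = ∑ k, S j k ^ 2`, which vanishes iff the row does. Finally, a null vector with
`x j ≠ 0` is a linear relation among the columns expressing `F_j` through the others.
-/

open Matrix Submodule

theorem Matrix.isIdempotentElem_mul_of_mul_mul_eq {R m n : Type*} [Semiring R] [Fintype m]
    [Fintype n] {A : Matrix m n R} {B : Matrix n m R} (h : A * B * A = A) :
    IsIdempotentElem (B * A) := by
  rw [IsIdempotentElem, Matrix.mul_assoc B, ← Matrix.mul_assoc A, h]

theorem mem_span_image_ne_iff_exists_sum_eq_zero {K V ι : Type*} [Field K] [AddCommGroup V]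
    [Module K V] [Fintype ι] {v : ι → V} {j : ι} :
    v j ∈ span K (v '' {i | i ≠ j}) ↔ ∃ c : ι → K, ∑ i, c i • v i = 0 ∧ c j ≠ 0 := by
  classical
  constructor
  · intro hj
    obtain ⟨l, hl, hlv⟩ := (Finsupp.mem_span_image_iff_linearCombination K).mp hj
    have hlj : l j = 0 := (Finsupp.mem_supported' K l).mp hl j (by simp)
    refine ⟨⇑l - Pi.single j 1, ?_, by simp [hlj]⟩
    rw [← Fintype.linearCombination_apply, map_sub, Fintype.linearCombination_apply_single,
      one_smul, Fintype.linearCombination_apply, ← hlv, Finsupp.linearCombination_apply,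
      Finsupp.sum_fintype _ _ fun _ => by rw [zero_smul], sub_self]
  · rintro ⟨c, hc, hcj⟩
    rw [← Finset.add_sum_erase _ _ (Finset.mem_univ j), add_eq_zero_iff_eq_neg] at hc
    refine (smul_mem_iff _ hcj).mp (hc ▸ neg_mem (sum_mem fun i hi => smul_mem _ _ ?_))
    exact subset_span ⟨i, Finset.ne_of_mem_erase hi, rfl⟩

theorem Matrix.col_mem_span_iff_exists_mulVec_eq_zero {K m n : Type*} [Field K] [Fintype n]
    (A : Matrix m n K) (j : n) :
    Aᵀ j ∈ span K (Aᵀ '' {i | i ≠ j}) ↔ ∃ x, A *ᵥ x = 0 ∧ x j ≠ 0 :=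
  mem_span_image_ne_iff_exists_sum_eq_zero.trans <| by
    simp only [mulVec_eq_sum, op_smul_eq_smul]

theorem Matrix.diag_eq_sum_mul_self {R n : Type*} [CommSemiring R] [Fintype n]
    {P : Matrix n n R} (hsymm : Pᵀ = P) (hidem : IsIdempotentElem P) (j : n) :
    P j j = ∑ k, P j k * P j k := by
  conv_lhs => rw [← hidem.eq, mul_apply]
  exact Finset.sum_congr rfl fun k _ => by rw [← transpose_apply P k j, hsymm]

theorem Matrix.row_eq_zero_of_diag_eq_zero {R n : Type*} [CommRing R] [LinearOrder R]
    [IsStrictOrderedRing R] [Fintype n] {P : Matrix n n R} (hsymm : Pᵀ = P)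
    (hidem : IsIdempotentElem P) {j : n} (hj : P j j = 0) : P j = 0 := by
  rw [diag_eq_sum_mul_self hsymm hidem,
    Finset.sum_eq_zero_iff_of_nonneg fun k _ => mul_self_nonneg _] at hj
  exact funext fun k => mul_self_eq_zero.mp (hj k (Finset.mem_univ k))

theorem column_independent_iff_signature_row_zero_general
    {m n : ℕ} (A : Matrix (Fin m) (Fin n) ℝ) (Ap : Matrix (Fin n) (Fin m) ℝ)
    (h1 : A * Ap * A = A)
    (h4 : (Ap * A)ᵀ = Ap * A)
    (S : Matrix (Fin n) (Fin n) ℝ) (hS : S = 1 - Ap * A) (j : Fin n) :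
    [ Aᵀ j ∉ Submodule.span ℝ (Aᵀ '' {i | i ≠ j}),
      ∀ x : Fin n → ℝ, A.mulVec x = 0 → x j = 0,
      ∀ k : Fin n, S j k = 0,
      S j j = 0 ].TFAE := by
  have hS_symm : Sᵀ = S := by rw [hS, transpose_sub, transpose_one, h4]
  have hS_idem : IsIdempotentElem S := hS ▸ (isIdempotentElem_mul_of_mul_mul_eq h1).one_sub
  have hAS : A * S = 0 := by
    rw [hS, Matrix.mul_sub, Matrix.mul_one, ← Matrix.mul_assoc, h1, sub_self]
  tfae_have 1 ↔ 2 := by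
    rw [col_mem_span_iff_exists_mulVec_eq_zero]
    push Not
    rfl
  tfae_have 2 → 3 := fun h k => h (fun i => S i k) (funext fun l => congrFun (congrFun hAS l) k)
  tfae_have 3 → 4 := fun h => h j
  tfae_have 4 → 3 := fun h => congrFun (row_eq_zero_of_diag_eq_zero hS_symm hS_idem h)
  tfae_have 3 → 2 := by
    intro h x hx
    have hSx : S *ᵥ x = x := by
      rw [hS, sub_mulVec, one_mulVec, ← mulVec_mulVec, hx, mulVec_zero, sub_zero]
    rw [← hSx, mulVec, show S j = 0 from funext h, zero_dotProduct]
  tfae_finish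

/-- For a column `F_j` of `A`, the following are equivalent:
(1) `F_j` is not in the span of the other columns;
(2) every null vector of `A` has `j`-th entry zero;
(3) the `j`-th row of `S = I - A⁺A` is zero;
(4) `S j j = 0`. -/
theorem column_independent_iff_signature_row_zero
    {m n : ℕ} (A : Matrix (Fin m) (Fin n) ℝ) (Ap : Matrix (Fin n) (Fin m) ℝ)
    (h1 : A * Ap * A = A) (h2 : Ap * A * Ap = Ap)
    (h3 : (A * Ap)ᵀ = A * Ap) (h4 : (Ap * A)ᵀ = Ap * A)
    (S : Matrix (Fin n) (Fin n) ℝ) (hS : S = 1 - Ap * A) (j : Fin n) :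
    [ Aᵀ j ∉ Submodule.span ℝ (Aᵀ '' {i | i ≠ j}),
      ∀ x : Fin n → ℝ, A.mulVec x = 0 → x j = 0,
      ∀ k : Fin n, S j k = 0,
      S j j = 0 ].TFAE :=
  column_independent_iff_signature_row_zero_general A Ap h1 h4 S hS j
end

section
/- Let A be a real m×n matrix with columns F₁,…,Fₙ, let A⁺ be a Moore–Penrose pseudoinverse of A, and set S = Iₙ − A⁺·A. Let τ be a subset of the column indices {1,…,n} that is span-separated, i.e., span{F_j : j ∈ τ} ∩ span{F_i : i ∉ τ} = {0}. Then S_{i,j} = 0 for every j ∈ τ and every i ∉ τ. -/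
open Matrix

/-- If `τ` is a span-separated subset of column indices of `A`
(the span of the columns indexed by `τ` meets the span of the remaining
columns trivially), then `S i j = 0` for every `j ∈ τ` and `i ∉ τ`. -/
theorem signature_zero_across_clusters
    {m n : ℕ} (A : Matrix (Fin m) (Fin n) ℝ) (Ap : Matrix (Fin n) (Fin m) ℝ)
    (h1 : A * Ap * A = A) (h2 : Ap * A * Ap = Ap)
    (h3 : (A * Ap)ᵀ = A * Ap) (h4 : (Ap * A)ᵀ = Ap * A)
    (S : Matrix (Fin n) (Fin n) ℝ) (hS : S = 1 - Ap * A)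
    (τ : Set (Fin n))
    (hsep : Submodule.span ℝ (Aᵀ '' τ) ⊓ Submodule.span ℝ (Aᵀ '' τᶜ) = ⊥) :
    ∀ j ∈ τ, ∀ i ∉ τ, S i j = 0 := by
  intro j hj i hi
  classical
  set v : Fin n → ℝ := fun k => if k ∈ τ then 0 else S k j with hv
  -- A * S = 0
  have hAS : A * S = 0 := by
    rw [hS, Matrix.mul_sub, Matrix.mul_one, ← Matrix.mul_assoc, h1, sub_self]
  have hcol : A *ᵥ (fun k => S k j) = 0 := by
    funext x
    have := congrFun (congrFun hAS x) j
    simpa [Matrix.mul_apply, Matrix.mulVec, dotProduct] using this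
  have hsum : ∑ k, (S k j) • (Aᵀ k) = (0 : Fin m → ℝ) := by
    funext x
    have := congrFun hcol x
    simpa [Matrix.mulVec, dotProduct, Finset.sum_apply, mul_comm] using this
  have hsplit := Finset.sum_filter_add_sum_filter_not Finset.univ (· ∈ τ)
      (fun k => (S k j) • (Aᵀ k))
  set w1 : Fin m → ℝ := ∑ k ∈ Finset.univ.filter (· ∈ τ), (S k j) • (Aᵀ k) with hw1def
  set w2 : Fin m → ℝ := ∑ k ∈ Finset.univ.filter (fun k => ¬ k ∈ τ), (S k j) • (Aᵀ k) with hw2def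
  have hw12 : w1 + w2 = 0 := hsplit.trans hsum
  have hw1mem : w1 ∈ Submodule.span ℝ (Aᵀ '' τ) :=
    Submodule.sum_mem _ fun k hk =>
      Submodule.smul_mem _ _ (Submodule.subset_span ⟨k, (Finset.mem_filter.mp hk).2, rfl⟩)
  have hw2mem : w2 ∈ Submodule.span ℝ (Aᵀ '' τᶜ) :=
    Submodule.sum_mem _ fun k hk =>
      Submodule.smul_mem _ _ (Submodule.subset_span ⟨k, (Finset.mem_filter.mp hk).2, rfl⟩)
  have hw1eq : w1 = -w2 := eq_neg_of_add_eq_zero_left hw12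
  have hw1zero : w1 = 0 := by
    have hmem : w1 ∈ Submodule.span ℝ (Aᵀ '' τ) ⊓ Submodule.span ℝ (Aᵀ '' τᶜ) :=
      Submodule.mem_inf.mpr ⟨hw1mem, hw1eq ▸ Submodule.neg_mem _ hw2mem⟩
    rw [hsep] at hmem
    simpa using hmem
  have hw2zero : w2 = 0 := by
    have := hw1eq
    rw [hw1zero] at this
    simpa using this.symm
  -- A *ᵥ v = w2 = 0
  have hAv : A *ᵥ v = 0 := by
    have : A *ᵥ v = ∑ k, v k • (Aᵀ k) := by
      funext x
      simp [Matrix.mulVec, dotProduct, Finset.sum_apply, mul_comm]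
    rw [this]
    rw [← hw2zero, hw2def]
    rw [← Finset.sum_filter_add_sum_filter_not Finset.univ (· ∈ τ) (fun k => v k • (Aᵀ k))]
    have e1 : ∑ k ∈ Finset.univ.filter (· ∈ τ), v k • (Aᵀ k) = 0 :=
      Finset.sum_eq_zero fun k hk => by
        simp [hv, (Finset.mem_filter.mp hk).2]
    have e2 : ∑ k ∈ Finset.univ.filter (fun k => ¬ k ∈ τ), v k • (Aᵀ k)
        = ∑ k ∈ Finset.univ.filter (fun k => ¬ k ∈ τ), (S k j) • (Aᵀ k) :=
      Finset.sum_congr rfl fun k hk => by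
        simp [hv, (Finset.mem_filter.mp hk).2]
    rw [e1, e2, zero_add]
  have hSv : S *ᵥ v = v := by
    rw [hS, Matrix.sub_mulVec, Matrix.one_mulVec, ← Matrix.mulVec_mulVec, hAv,
      Matrix.mulVec_zero, sub_zero]
  have hst : Sᵀ = S := by
    rw [hS, Matrix.transpose_sub, Matrix.transpose_one, h4]
  have hsym : ∀ a b, S a b = S b a := fun a b => (congrFun (congrFun hst a) b).symm
  have hvj : v j = 0 := by simp [hv, hj]
  have hsum2 : ∑ k, (v k) ^ 2 = 0 := by
    have hj' : (S *ᵥ v) j = ∑ k, S j k * v k := by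
      simp [Matrix.mulVec, dotProduct]
    calc ∑ k, (v k) ^ 2 = ∑ k, S j k * v k := by
          refine Finset.sum_congr rfl fun k _ => ?_
          by_cases hk : k ∈ τ
          · simp [hv, hk]
          · simp [hv, hk, hsym j k, sq]
      _ = (S *ᵥ v) j := hj'.symm
      _ = v j := congrFun hSv j
      _ = 0 := hvj
  have hvi : v i = 0 := by
    have := (Finset.sum_eq_zero_iff_of_nonneg (fun k _ => sq_nonneg (v k))).mp hsum2 i
      (Finset.mem_univ i)
    exact pow_eq_zero_iff (two_ne_zero) |>.mp this
  simpa [hv, hi] using hvi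
end

section
/- Let A be a real m×n matrix with columns F₁,…,Fₙ, let A⁺ be a Moore–Penrose pseudoinverse of A, and set S = Iₙ − A⁺·A. Let τ be a subset of column indices with |τ| ≥ 2 that is span-separated (span{F_j : j ∈ τ} ∩ span{F_i : i ∉ τ} = {0}) and indecomposable (τ admits no partition into two nonempty subsets Y₁, Y₂ with span{F_j : j ∈ Y₁} ∩ span{F_j : j ∈ Y₂} = {0}). Then for every i ∈ τ there exists j ∈ τ with j ≠ i and S_{i,j} ≠ 0. -/
/-!
If row `i` of `S` vanished on `τ \ {i}`, a relation `a • F i = ∑_{j ∈ τ \ {i}} y j • F j` with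
`a ≠ 0` would give a kernel vector `x = a • eᵢ - y` on whose support row `i` of `P = A⁺A` is zero
off the diagonal, so `0 = (P x) i = P i i * a` and `P i i = 0`. As `P` is a symmetric idempotent,
`P i i` is the sum of squares of column `i` of `P`, so that column vanishes and
`F i = (A * P) eᵢ = 0`. Hence `{i}` and `τ \ {i}` would split `τ`.
-/

open Matrix

section

variable {R m n : Type*} [Fintype n]

theorem Matrix.apply_eq_zero_of_diag_eq_zero [CommRing R] [LinearOrder R] [IsStrictOrderedRing R]
    {P : Matrix n n R} (hsymm : Pᵀ = P) (hidem : P * P = P) {i : n} (hii : P i i = 0) (k : n) :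
    P k i = 0 := by
  have hsq : ∑ j, P j i * P j i = 0 := by
    have hdiag := congrFun (congrFun hidem i) i
    rw [mul_apply, hii] at hdiag
    rw [← hdiag]
    exact Finset.sum_congr rfl fun j _ => by rw [← transpose_apply P i j, hsymm]
  exact mul_self_eq_zero.mp <|
    (Finset.sum_eq_zero_iff_of_nonneg fun j _ => mul_self_nonneg (P j i)).mp hsq k
      (Finset.mem_univ k)

theorem Matrix.exists_mulVec_eq_of_mem_span_image_transpose [CommRing R] {A : Matrix m n R}
    {T : Set n} {v : m → R} (hv : v ∈ Submodule.span R (Aᵀ '' T)) :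
    ∃ x : n → R, (∀ j ∉ T, x j = 0) ∧ A *ᵥ x = v := by
  obtain ⟨l, hl, rfl⟩ := (Finsupp.mem_span_image_iff_linearCombination R).mp hv
  refine ⟨l, fun j hj => Finsupp.notMem_support_iff.mp fun h => hj (hl h), ?_⟩
  ext k
  rw [Finsupp.linearCombination_apply (R := R) (v := (Aᵀ : n → m → R)),
    Finsupp.sum_fintype _ _ (by simp)]
  simp [mulVec, dotProduct, mul_comm]

theorem transpose_apply_eq_zero_of_mulVec_eq_zero [Fintype m] [DecidableEq n] [CommRing R]
    [LinearOrder R] [IsStrictOrderedRing R] {A : Matrix m n R} {Ap : Matrix n m R}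
    (h1 : A * Ap * A = A) (h4 : (Ap * A)ᵀ = Ap * A) {x : n → R} (hx : A *ᵥ x = 0) {i : n}
    (hxi : x i ≠ 0) (hrow : ∀ j ≠ i, x j ≠ 0 → (Ap * A) i j = 0) : Aᵀ i = 0 := by
  have hidem : Ap * A * (Ap * A) = Ap * A := by
    rw [Matrix.mul_assoc, ← Matrix.mul_assoc A, h1]
  have hPx : ((Ap * A) *ᵥ x) i = (Ap * A) i i * x i := by
    simp only [mulVec, dotProduct]
    refine Finset.sum_eq_single i (fun j _ hji => ?_) (by simp)
    by_cases hxj : x j = 0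
    · rw [hxj, mul_zero]
    · rw [hrow j hji hxj, zero_mul]
  have hii : (Ap * A) i i = 0 := by
    rw [← mulVec_mulVec, hx, mulVec_zero] at hPx
    exact (mul_eq_zero.mp hPx.symm).resolve_right hxi
  ext k
  rw [transpose_apply, ← h1, Matrix.mul_assoc, mul_apply]
  simp [Matrix.apply_eq_zero_of_diag_eq_zero h4 hidem hii]

end

theorem signature_row_has_offdiag_nonzero_in_cluster_general
    {m n : ℕ} (A : Matrix (Fin m) (Fin n) ℝ) (Ap : Matrix (Fin n) (Fin m) ℝ)
    (h1 : A * Ap * A = A)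
    (h4 : (Ap * A)ᵀ = Ap * A)
    (S : Matrix (Fin n) (Fin n) ℝ) (hS : S = 1 - Ap * A)
    (τ : Set (Fin n)) (hcard : 2 ≤ τ.ncard)
    (hind : ¬ ∃ Y₁ Y₂ : Set (Fin n), Y₁.Nonempty ∧ Y₂.Nonempty ∧ Disjoint Y₁ Y₂ ∧
      Y₁ ∪ Y₂ = τ ∧
      Submodule.span ℝ (Aᵀ '' Y₁) ⊓ Submodule.span ℝ (Aᵀ '' Y₂) = ⊥) :
    ∀ i ∈ τ, ∃ j ∈ τ, j ≠ i ∧ S i j ≠ 0 := by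
  intro i hi
  by_contra! hrow
  obtain ⟨j, hjτ, hji⟩ := Set.exists_ne_of_one_lt_ncard hcard i
  refine hind ⟨{i}, τ \ {i}, Set.singleton_nonempty i, ⟨j, hjτ, hji⟩, Set.disjoint_sdiff_right,
    Set.union_sdiff_cancel (Set.singleton_subset_iff.mpr hi), ?_⟩
  rw [eq_bot_iff]
  rintro v ⟨hvi, hvτ⟩
  rw [show Aᵀ '' {i} = {Aᵀ i} from Set.image_singleton] at hvi
  obtain ⟨a, rfl⟩ := Submodule.mem_span_singleton.mp hvi
  obtain ⟨y, hy, hAy⟩ := exists_mulVec_eq_of_mem_span_image_transpose hvτ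
  rcases eq_or_ne a 0 with rfl | ha
  · simp
  have hcol : Aᵀ i = 0 := by
    refine transpose_apply_eq_zero_of_mulVec_eq_zero h1 h4 (x := Pi.single i a - y) ?_ ?_ ?_
    · rw [mulVec_sub, hAy, mulVec_single]
      ext k
      simp
    · simp [hy i (by simp), ha]
    · intro k hki hxk
      have hkτ : k ∈ τ := by
        by_contra hkτ
        exact hxk (by simp [hki, hy k fun h => hkτ h.1])
      simpa [hS, one_apply_ne hki.symm] using hrow k hkτ hki
  simp [hcol]

/-- If `τ` (with at least two elements) is a span-separated and indecomposable
subset of column indices of `A`, then every `i ∈ τ` has some `j ∈ τ`, `j ≠ i`,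
with `S i j ≠ 0`. -/
theorem signature_row_has_offdiag_nonzero_in_cluster
    {m n : ℕ} (A : Matrix (Fin m) (Fin n) ℝ) (Ap : Matrix (Fin n) (Fin m) ℝ)
    (h1 : A * Ap * A = A) (h2 : Ap * A * Ap = Ap)
    (h3 : (A * Ap)ᵀ = A * Ap) (h4 : (Ap * A)ᵀ = Ap * A)
    (S : Matrix (Fin n) (Fin n) ℝ) (hS : S = 1 - Ap * A)
    (τ : Set (Fin n)) (hcard : 2 ≤ τ.ncard)
    (hsep : Submodule.span ℝ (Aᵀ '' τ) ⊓ Submodule.span ℝ (Aᵀ '' τᶜ) = ⊥)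
    (hind : ¬ ∃ Y₁ Y₂ : Set (Fin n), Y₁.Nonempty ∧ Y₂.Nonempty ∧ Disjoint Y₁ Y₂ ∧
      Y₁ ∪ Y₂ = τ ∧
      Submodule.span ℝ (Aᵀ '' Y₁) ⊓ Submodule.span ℝ (Aᵀ '' Y₂) = ⊥) :
    ∀ i ∈ τ, ∃ j ∈ τ, j ≠ i ∧ S i j ≠ 0 :=
  signature_row_has_offdiag_nonzero_in_cluster_general A Ap h1 h4 S hS τ hcard hind
end

section
/- Let A be a real m×n matrix with columns F₁,…,Fₙ, let A⁺ be a Moore–Penrose pseudoinverse of A, and set S = Iₙ − A⁺·A. Let τ = τ₁ ∪ τ₂ be a subset of column indices, where τ₁ and τ₂ are disjoint and nonempty, the columns {F_k : k ∈ τ₂} are linearly independent, and each F_i with i ∈ τ₁ lies in span{F_k : k ∈ τ₂}. Assume τ is span-separated (span{F_j : j ∈ τ} ∩ span{F_i : i ∉ τ} = {0}) and indecomposable (τ admits no partition into two nonempty subsets Y₁, Y₂ with span{F_j : j ∈ Y₁} ∩ span{F_j : j ∈ Y₂} = {0}). Then: (1) for every k ∈ τ₂ there exists j ∈ τ₁ with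 S_{k,j} ≠ 0; and (2) for every i ∈ τ₁ there exists j ∈ τ₂ with S_{i,j} ≠ 0. -/
open Matrix

/-! `S = 1 - A⁺ A` is the orthogonal projector onto `ker A`: it is symmetric, its rows lie in
`ker A`, and `S v = v` for `v ∈ ker A`. Span-separation of `τ` makes `S` block diagonal with
respect to `τ` and `τᶜ`.

(1) If row `k ∈ τ₂` of `S` vanished on `τ₁`, it would be a kernel vector supported on the
independent columns `τ₂`, hence zero; then every kernel vector vanishes at `k`, so `F_k` splits
off `τ`, contradicting indecomposability.

(2) If row `i ∈ τ₁` of `S` vanished on `τ₂`, then `eᵢ - Sᵢ`, which is orthogonal to `ker A`,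
vanishes on `τ₂`, hence on `τ₁` (each `F_j`, `j ∈ τ₁`, gives a kernel vector `e_j - d` with `d`
supported on `τ₂`). So `Sᵢ = eᵢ`, whence `F_i = A Sᵢ = 0`, and `F_i` again splits off `τ`. -/

variable {R : Type*} {m n : Type*}

def IsSpanSeparated [Semiring R] (A : Matrix m n R) (τ : Set n) : Prop :=
  Submodule.span R (Aᵀ '' τ) ⊓ Submodule.span R (Aᵀ '' τᶜ) = ⊥

def IsIndecomposable [Semiring R] (A : Matrix m n R) (τ : Set n) : Prop :=
  ¬ ∃ Y₁ Y₂ : Set n, Y₁.Nonempty ∧ Y₂.Nonempty ∧ Disjoint Y₁ Y₂ ∧ Y₁ ∪ Y₂ = τ ∧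
    Submodule.span R (Aᵀ '' Y₁) ⊓ Submodule.span R (Aᵀ '' Y₂) = ⊥

structure IsOrthogonalProjectorOntoKer [Semiring R] [Fintype n] (A : Matrix m n R)
    (S : Matrix n n R) : Prop where
  transpose_eq : Sᵀ = S
  mul_eq_zero : A * S = 0
  mulVec_eq_self : ∀ v, A *ᵥ v = 0 → S *ᵥ v = v

section CommRing

variable [CommRing R] {A : Matrix m n R}

theorem mem_span_transpose_image_iff [Fintype n] [DecidableEq n] {s : Set n} {x : m → R} :
    x ∈ Submodule.span R (Aᵀ '' s) ↔ ∃ d : n → R, (∀ j ∉ s, d j = 0) ∧ A *ᵥ d = x := by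
  have himage : Aᵀ '' s = A.mulVecLin '' (Pi.basisFun R n '' s) := by
    rw [Set.image_image]
    exact Set.image_congr fun j _ => by simp [col_def]
  rw [himage, Submodule.span_image, Submodule.mem_map]
  simp only [Module.Basis.mem_span_image, Pi.basisFun_repr, Finsupp.support_subset_iff]
  rfl

theorem IsSpanSeparated.mulVec_indicator_eq_zero [Fintype n] [DecidableEq n] {τ : Set n}
    (hsep : IsSpanSeparated A τ) {v : n → R} (hv : A *ᵥ v = 0) :
    A *ᵥ τ.indicator v = 0 := by
  have hτ : A *ᵥ τ.indicator v ∈ Submodule.span R (Aᵀ '' τ) :=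
    mem_span_transpose_image_iff.2 ⟨_, fun _ hj => Set.indicator_of_notMem hj v, rfl⟩
  have hτc : A *ᵥ τᶜ.indicator v ∈ Submodule.span R (Aᵀ '' τᶜ) :=
    mem_span_transpose_image_iff.2 ⟨_, fun _ hj => Set.indicator_of_notMem hj v, rfl⟩
  have hsum : A *ᵥ τ.indicator v + A *ᵥ τᶜ.indicator v = 0 := by
    rw [← mulVec_add, Set.indicator_self_add_compl, hv]
  rw [eq_neg_of_add_eq_zero_right hsum] at hτc
  have := Submodule.mem_inf.2 ⟨hτ, neg_mem_iff.1 hτc⟩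
  rwa [hsep, Submodule.mem_bot] at this

theorem span_inf_span_eq_bot_of_forall_ker_apply_eq_zero [Fintype n] [DecidableEq n]
    {Y₁ Y₂ : Set n} (hdisj : Disjoint Y₁ Y₂) (hker : ∀ v, A *ᵥ v = 0 → ∀ j ∈ Y₁, v j = 0) :
    Submodule.span R (Aᵀ '' Y₁) ⊓ Submodule.span R (Aᵀ '' Y₂) = ⊥ := by
  refine eq_bot_iff.2 fun x hx => ?_
  obtain ⟨hx₁, hx₂⟩ := Submodule.mem_inf.1 hx
  obtain ⟨d₁, hd₁, rfl⟩ := mem_span_transpose_image_iff.1 hx₁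
  obtain ⟨d₂, hd₂, hd⟩ := mem_span_transpose_image_iff.1 hx₂
  have hd₁_zero : d₁ = 0 := funext fun j => by
    by_cases hj : j ∈ Y₁
    · have := hker (d₁ - d₂) (by rw [mulVec_sub, hd, sub_self]) j hj
      rwa [Pi.sub_apply, hd₂ j (hdisj.notMem_of_mem_left hj), sub_zero] at this
    · exact hd₁ j hj
  rw [hd₁_zero, mulVec_zero]
  exact Submodule.zero_mem _

theorem IsIndecomposable.span_singleton_inf_ne_bot {τ : Set n} (hind : IsIndecomposable A τ)
    {j k : n} (hk : k ∈ τ) (hj : j ∈ τ) (hjk : j ≠ k) :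
    Submodule.span R (Aᵀ '' {k}) ⊓ Submodule.span R (Aᵀ '' (τ \ {k})) ≠ ⊥ := fun h =>
  hind ⟨{k}, τ \ {k}, Set.singleton_nonempty k, ⟨j, hj, hjk⟩, Set.disjoint_sdiff_right,
    Set.union_sdiff_cancel (Set.singleton_subset_iff.2 hk), h⟩

theorem eq_zero_of_mulVec_eq_zero_of_linearIndepOn [Fintype n] {s : Set n}
    (hli : LinearIndepOn R A.col s) {v : n → R} (hv : A *ᵥ v = 0) (hs : ∀ j ∉ s, v j = 0) :
    v = 0 := by
  have hcomb : Finsupp.linearCombination R A.col (Finsupp.equivFunOnFinite.symm v) = A *ᵥ v := by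
    rw [Finsupp.linearCombination_apply, Finsupp.sum_fintype _ _ (by simp), mulVec_eq_sum]
    simp [col_def]
  have := linearIndepOn_iff.1 hli _ ((Finsupp.mem_supported' R _).2 hs) (hcomb.trans hv)
  simpa using congrArg DFunLike.coe this

theorem apply_eq_zero_of_forall_ker_dotProduct_eq_zero [Fintype n] [DecidableEq n] {s : Set n}
    {w : n → R} (hw : ∀ u, A *ᵥ u = 0 → w ⬝ᵥ u = 0) (hs : ∀ j ∈ s, w j = 0) {i : n}
    (hi : Aᵀ i ∈ Submodule.span R (Aᵀ '' s)) : w i = 0 := by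
  obtain ⟨d, hd, hdA⟩ := mem_span_transpose_image_iff.1 hi
  have hwd : w ⬝ᵥ d = 0 := Finset.sum_eq_zero fun j _ => by
    by_cases hj : j ∈ s
    · rw [hs j hj, zero_mul]
    · rw [hd j hj, mul_zero]
  have := hw (Pi.single i 1 - d) (by rw [mulVec_sub, hdA, mulVec_single_one, col_def, sub_self])
  rwa [dotProduct_sub, hwd, sub_zero, dotProduct_single_one] at this

theorem isOrthogonalProjectorOntoKer_one_sub_mul [Fintype m] [Fintype n] [DecidableEq n]
    {Ap : Matrix n m R} (h1 : A * Ap * A = A) (h4 : (Ap * A)ᵀ = Ap * A) :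
    IsOrthogonalProjectorOntoKer A (1 - Ap * A) where
  transpose_eq := by rw [transpose_sub, transpose_one, h4]
  mul_eq_zero := by rw [Matrix.mul_sub, Matrix.mul_one, ← Matrix.mul_assoc, h1, sub_self]
  mulVec_eq_self v hv := by
    rw [sub_mulVec, one_mulVec, ← mulVec_mulVec, hv, mulVec_zero, sub_zero]

namespace IsOrthogonalProjectorOntoKer

variable [Fintype n] {S : Matrix n n R}

theorem apply_comm (hS : IsOrthogonalProjectorOntoKer A S) (i j : n) : S i j = S j i := by
  rw [← hS.transpose_eq, transpose_apply, hS.transpose_eq]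

theorem mulVec_row_eq_zero [DecidableEq n] (hS : IsOrthogonalProjectorOntoKer A S) (i : n) :
    A *ᵥ S i = 0 := by
  have hrow : S i = S *ᵥ Pi.single i 1 := by
    rw [mulVec_single_one, col_def, hS.transpose_eq]
  rw [hrow, mulVec_mulVec, hS.mul_eq_zero, zero_mulVec]

theorem row_dotProduct_eq_apply (hS : IsOrthogonalProjectorOntoKer A S) {v : n → R}
    (hv : A *ᵥ v = 0) (i : n) : S i ⬝ᵥ v = v i :=
  congrFun (hS.mulVec_eq_self v hv) i

theorem apply_eq_zero_of_isSpanSeparated [DecidableEq n] [LinearOrder R]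
    [IsStrictOrderedRing R] (hS : IsOrthogonalProjectorOntoKer A S) {τ : Set n}
    (hsep : IsSpanSeparated A τ) {i j : n} (hi : i ∈ τ) (hj : j ∉ τ) : S i j = 0 := by
  set u := τ.indicator (S j)
  have hu : A *ᵥ u = 0 := hsep.mulVec_indicator_eq_zero (hS.mulVec_row_eq_zero j)
  have huu : u ⬝ᵥ u = 0 :=
    calc u ⬝ᵥ u = S j ⬝ᵥ u := Finset.sum_congr rfl fun l _ => by
            by_cases hl : l ∈ τ <;> simp [u, hl]
      _ = u j := hS.row_dotProduct_eq_apply hu j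
      _ = 0 := Set.indicator_of_notMem hj _
  have hui : τ.indicator (S j) i = 0 := congrFun (dotProduct_self_eq_zero.1 huu) i
  rwa [Set.indicator_of_mem hi, ← hS.apply_comm] at hui

variable [DecidableEq n] {τ₁ τ₂ : Set n}

theorem exists_apply_ne_zero_of_mem_independent [LinearOrder R] [IsStrictOrderedRing R]
    (hS : IsOrthogonalProjectorOntoKer A S) (hsep : IsSpanSeparated A (τ₁ ∪ τ₂))
    (hind : IsIndecomposable A (τ₁ ∪ τ₂)) (hdisj : Disjoint τ₁ τ₂) (hne : τ₁.Nonempty)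
    (hli : LinearIndepOn R A.col τ₂) {k : n} (hk : k ∈ τ₂) : ∃ j ∈ τ₁, S k j ≠ 0 := by
  by_contra! hrow
  have hrow_zero : S k = 0 :=
    eq_zero_of_mulVec_eq_zero_of_linearIndepOn hli (hS.mulVec_row_eq_zero k) fun l hl₂ => by
      by_cases hl₁ : l ∈ τ₁
      · exact hrow l hl₁
      · exact hS.apply_eq_zero_of_isSpanSeparated hsep (Or.inr hk) (by simp [hl₁, hl₂])
  have hker : ∀ v, A *ᵥ v = 0 → ∀ j ∈ ({k} : Set n), v j = 0 := by
    rintro v hv j rfl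
    rw [← hS.row_dotProduct_eq_apply hv, hrow_zero, zero_dotProduct]
  obtain ⟨i, hi⟩ := hne
  exact hind.span_singleton_inf_ne_bot (Or.inr hk) (Or.inl hi) (hdisj.ne_of_mem hi hk)
    (span_inf_span_eq_bot_of_forall_ker_apply_eq_zero Set.disjoint_sdiff_right hker)

theorem exists_apply_ne_zero_of_mem_dependent [LinearOrder R] [IsStrictOrderedRing R]
    (hS : IsOrthogonalProjectorOntoKer A S) (hsep : IsSpanSeparated A (τ₁ ∪ τ₂))
    (hind : IsIndecomposable A (τ₁ ∪ τ₂)) (hdisj : Disjoint τ₁ τ₂) (hne : τ₂.Nonempty)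
    (hspan : ∀ i ∈ τ₁, Aᵀ i ∈ Submodule.span R (Aᵀ '' τ₂)) {i : n} (hi : i ∈ τ₁) :
    ∃ j ∈ τ₂, S i j ≠ 0 := by
  by_contra! hrow
  have hi₂ : i ∉ τ₂ := hdisj.notMem_of_mem_left hi
  have hrow_single : S i = Pi.single i 1 := funext fun l => by
    by_cases hl₁ : l ∈ τ₁
    · have hw : ∀ u, A *ᵥ u = 0 → (Pi.single i 1 - S i) ⬝ᵥ u = 0 := fun u hu => by
        rw [sub_dotProduct, single_one_dotProduct, hS.row_dotProduct_eq_apply hu, sub_self]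
      have hw₂ : ∀ j ∈ τ₂, (Pi.single i 1 - S i : n → R) j = 0 := fun j hj => by
        rw [Pi.sub_apply, hrow j hj, Pi.single_eq_of_ne (ne_of_mem_of_not_mem hj hi₂), sub_zero]
      exact (sub_eq_zero.1 (apply_eq_zero_of_forall_ker_dotProduct_eq_zero hw hw₂
        (hspan l hl₁))).symm
    have hl_ne : l ≠ i := fun h => hl₁ (h ▸ hi)
    by_cases hl₂ : l ∈ τ₂
    · rw [hrow l hl₂, Pi.single_eq_of_ne hl_ne]
    · rw [hS.apply_eq_zero_of_isSpanSeparated hsep (Or.inl hi) (by simp [hl₁, hl₂]),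
        Pi.single_eq_of_ne hl_ne]
  have hAi : Aᵀ i = 0 := by
    simpa [hrow_single, mulVec_single_one, col_def] using hS.mulVec_row_eq_zero i
  have hspan_i : Submodule.span R (Aᵀ '' {i}) = ⊥ := by
    rw [show Aᵀ '' {i} = {Aᵀ i} from Set.image_singleton, hAi, Submodule.span_zero_singleton]
  obtain ⟨k, hk⟩ := hne
  exact hind.span_singleton_inf_ne_bot (Or.inl hi) (Or.inr hk) (hdisj.ne_of_mem hi hk).symm
    (by rw [hspan_i, bot_inf_eq])

end IsOrthogonalProjectorOntoKer

end CommRing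

theorem signature_connects_basis_and_dependent_columns_general
    {m n : ℕ} (A : Matrix (Fin m) (Fin n) ℝ) (Ap : Matrix (Fin n) (Fin m) ℝ)
    (h1 : A * Ap * A = A)
    (h4 : (Ap * A)ᵀ = Ap * A)
    (S : Matrix (Fin n) (Fin n) ℝ) (hS : S = 1 - Ap * A)
    (τ τ₁ τ₂ : Set (Fin n)) (hτ : τ = τ₁ ∪ τ₂)
    (hdisj : Disjoint τ₁ τ₂) (hne1 : τ₁.Nonempty) (hne2 : τ₂.Nonempty)
    (hli : LinearIndependent ℝ (fun k : τ₂ => Aᵀ k.1))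
    (hspan : ∀ i ∈ τ₁, Aᵀ i ∈ Submodule.span ℝ (Aᵀ '' τ₂))
    (hsep : Submodule.span ℝ (Aᵀ '' τ) ⊓ Submodule.span ℝ (Aᵀ '' τᶜ) = ⊥)
    (hind : ¬ ∃ Y₁ Y₂ : Set (Fin n), Y₁.Nonempty ∧ Y₂.Nonempty ∧ Disjoint Y₁ Y₂ ∧
      Y₁ ∪ Y₂ = τ ∧
      Submodule.span ℝ (Aᵀ '' Y₁) ⊓ Submodule.span ℝ (Aᵀ '' Y₂) = ⊥) :
    (∀ k ∈ τ₂, ∃ j ∈ τ₁, S k j ≠ 0) ∧ (∀ i ∈ τ₁, ∃ j ∈ τ₂, S i j ≠ 0) := by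
  subst hS hτ
  have hP := isOrthogonalProjectorOntoKer_one_sub_mul h1 h4
  exact ⟨fun k hk => hP.exists_apply_ne_zero_of_mem_independent hsep hind hdisj hne1 hli hk,
    fun i hi => hP.exists_apply_ne_zero_of_mem_dependent hsep hind hdisj hne2 hspan hi⟩

/-- Let `τ = τ₁ ∪ τ₂` be a span-separated, indecomposable cluster of columns
of `A`, where the columns indexed by `τ₂` are linearly independent and every
column indexed by `τ₁` lies in their span.  Then every `k ∈ τ₂` has `j ∈ τ₁`
with `S k j ≠ 0`, and every `i ∈ τ₁` has `j ∈ τ₂` with `S i j ≠ 0`. -/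
theorem signature_connects_basis_and_dependent_columns
    {m n : ℕ} (A : Matrix (Fin m) (Fin n) ℝ) (Ap : Matrix (Fin n) (Fin m) ℝ)
    (h1 : A * Ap * A = A) (h2 : Ap * A * Ap = Ap)
    (h3 : (A * Ap)ᵀ = A * Ap) (h4 : (Ap * A)ᵀ = Ap * A)
    (S : Matrix (Fin n) (Fin n) ℝ) (hS : S = 1 - Ap * A)
    (τ τ₁ τ₂ : Set (Fin n)) (hτ : τ = τ₁ ∪ τ₂)
    (hdisj : Disjoint τ₁ τ₂) (hne1 : τ₁.Nonempty) (hne2 : τ₂.Nonempty)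
    (hli : LinearIndependent ℝ (fun k : τ₂ => Aᵀ k.1))
    (hspan : ∀ i ∈ τ₁, Aᵀ i ∈ Submodule.span ℝ (Aᵀ '' τ₂))
    (hsep : Submodule.span ℝ (Aᵀ '' τ) ⊓ Submodule.span ℝ (Aᵀ '' τᶜ) = ⊥)
    (hind : ¬ ∃ Y₁ Y₂ : Set (Fin n), Y₁.Nonempty ∧ Y₂.Nonempty ∧ Disjoint Y₁ Y₂ ∧
      Y₁ ∪ Y₂ = τ ∧
      Submodule.span ℝ (Aᵀ '' Y₁) ⊓ Submodule.span ℝ (Aᵀ '' Y₂) = ⊥) :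
    (∀ k ∈ τ₂, ∃ j ∈ τ₁, S k j ≠ 0) ∧ (∀ i ∈ τ₁, ∃ j ∈ τ₂, S i j ≠ 0) :=
  signature_connects_basis_and_dependent_columns_general A Ap h1 h4 S hS τ τ₁ τ₂ hτ hdisj hne1 hne2
    hli hspan hsep hind
end

section
/- Let A be a real m×n matrix with columns F₁,…,Fₙ, let A⁺ be a Moore–Penrose pseudoinverse of A, and set S = Iₙ − A⁺·A. Let τ be a span-separated subset of column indices (span{F_j : j ∈ τ} ∩ span{F_i : i ∉ τ} = {0}), and suppose τ is partitioned into two nonempty disjoint subsets Y₁ and Y₂ (Y₁ ∪ Y₂ = τ) such that S_{i,j} = 0 for all i ∈ Y₁ and j ∈ Y₂. Then span{F_i : i ∈ Y₁} ∩ span{F_j : j ∈ Y₂} = {0}. -/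
/-! If `x = A c = A d` with `c` supported on `Y₁` and `d` on `Y₂`, then `P = A⁺A` is an orthogonal
projection with `A P = A` and `P c = P d`. Hence `‖P c‖² = cᵀ P c = cᵀ P d`, which vanishes because
`P` agrees with `-S` off the diagonal and so has a zero block `Y₁ × Y₂`. Thus `P c = 0` and
`x = A P c = 0`. -/

open Matrix

namespace Matrix

variable {m n R : Type*} [Fintype n]

theorem linearCombination_transpose [CommSemiring R] (A : Matrix m n R) (l : n →₀ R) :
    Finsupp.linearCombination R Aᵀ l = A *ᵥ l := by
  rw [← vecMul_transpose, vecMul_eq_sum]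
  exact (Finsupp.linearCombination_apply R l).trans
    (Finsupp.sum_fintype _ _ fun _ => zero_smul R _)

theorem mem_span_image_transpose_iff [CommSemiring R] {A : Matrix m n R} {s : Set n}
    {x : m → R} :
    x ∈ Submodule.span R (Aᵀ '' s) ↔ ∃ c : n → R, (∀ i ∉ s, c i = 0) ∧ A *ᵥ c = x := by
  refine (Finsupp.mem_span_image_iff_linearCombination R).trans ⟨?_, ?_⟩
  · rintro ⟨l, hl, rfl⟩
    exact ⟨l, (Finsupp.mem_supported' R l).1 hl, (linearCombination_transpose A l).symm⟩
  · rintro ⟨c, hc, rfl⟩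
    refine ⟨Finsupp.equivFunOnFinite.symm c, (Finsupp.mem_supported' R _).2 hc, ?_⟩
    rw [linearCombination_transpose]
    rfl

theorem dotProduct_mulVec_eq_zero_of_apply_eq_zero [NonUnitalNonAssocSemiring R]
    {P : Matrix n n R} {s t : Set n} (hP : ∀ i ∈ s, ∀ j ∈ t, P i j = 0)
    {c d : n → R} (hc : ∀ i ∉ s, c i = 0) (hd : ∀ j ∉ t, d j = 0) :
    c ⬝ᵥ (P *ᵥ d) = 0 := by
  refine Finset.sum_eq_zero fun i _ => ?_
  by_cases hi : i ∈ s
  · suffices (P *ᵥ d) i = 0 by rw [this, mul_zero]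
    refine Finset.sum_eq_zero fun j _ => ?_
    by_cases hj : j ∈ t
    · exact mul_eq_zero_of_left (hP i hi j hj) _
    · rw [hd j hj, mul_zero]
  · rw [hc i hi, zero_mul]

theorem dotProduct_mulVec_self_of_symm_idem [CommSemiring R] {P : Matrix n n R}
    (hsymm : Pᵀ = P) (hidem : P * P = P) (c : n → R) :
    (P *ᵥ c) ⬝ᵥ (P *ᵥ c) = c ⬝ᵥ (P *ᵥ c) := by
  calc (P *ᵥ c) ⬝ᵥ (P *ᵥ c) = (c ᵥ* P) ⬝ᵥ (P *ᵥ c) := by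
        rw [← vecMul_transpose, hsymm]
    _ = c ⬝ᵥ (P *ᵥ c) := by rw [← dotProduct_mulVec, mulVec_mulVec, hidem]

theorem mulVec_eq_zero_of_mulVec_eq_of_apply_eq_zero [CommRing R] [LinearOrder R]
    [IsStrictOrderedRing R] {P : Matrix n n R} (hsymm : Pᵀ = P) (hidem : P * P = P)
    {s t : Set n} (hP : ∀ i ∈ s, ∀ j ∈ t, P i j = 0)
    {c d : n → R} (hc : ∀ i ∉ s, c i = 0) (hd : ∀ j ∉ t, d j = 0)
    (hcd : P *ᵥ c = P *ᵥ d) : P *ᵥ c = 0 := by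
  rw [← dotProduct_self_eq_zero, dotProduct_mulVec_self_of_symm_idem hsymm hidem, hcd]
  exact dotProduct_mulVec_eq_zero_of_apply_eq_zero hP hc hd

end Matrix

theorem spans_disjoint_of_signature_zero_between_general
    {m n : ℕ} (A : Matrix (Fin m) (Fin n) ℝ) (Ap : Matrix (Fin n) (Fin m) ℝ)
    (h1 : A * Ap * A = A)
    (h4 : (Ap * A)ᵀ = Ap * A)
    (S : Matrix (Fin n) (Fin n) ℝ) (hS : S = 1 - Ap * A)
    (Y₁ Y₂ : Set (Fin n))
    (hdisj : Disjoint Y₁ Y₂)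
    (hzero : ∀ i ∈ Y₁, ∀ j ∈ Y₂, S i j = 0) :
    Submodule.span ℝ (Aᵀ '' Y₁) ⊓ Submodule.span ℝ (Aᵀ '' Y₂) = ⊥ := by
  refine eq_bot_iff.2 fun x hx => ?_
  obtain ⟨c, hc, rfl⟩ := mem_span_image_transpose_iff.1 (Submodule.mem_inf.1 hx).1
  obtain ⟨d, hd, hdc⟩ := mem_span_image_transpose_iff.1 (Submodule.mem_inf.1 hx).2
  have hAP : A * (Ap * A) = A := by rw [← Matrix.mul_assoc, h1]
  have hidem : Ap * A * (Ap * A) = Ap * A := by rw [Matrix.mul_assoc, hAP]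
  have hP : ∀ i ∈ Y₁, ∀ j ∈ Y₂, (Ap * A) i j = 0 := fun i hi j hj => by
    have hij : i ≠ j := hdisj.ne_of_mem hi hj
    simpa [hS, one_apply_ne hij] using hzero i hi j hj
  have hPcd : (Ap * A) *ᵥ c = (Ap * A) *ᵥ d := by rw [← mulVec_mulVec, ← mulVec_mulVec, hdc]
  rw [Submodule.mem_bot, ← hAP, ← mulVec_mulVec,
    mulVec_eq_zero_of_mulVec_eq_of_apply_eq_zero h4 hidem hP hc hd hPcd, mulVec_zero]

/-- If a span-separated set `τ` of column indices is partitioned into nonempty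
disjoint subsets `Y₁, Y₂` with `S i j = 0` for all `i ∈ Y₁`, `j ∈ Y₂`, then the
spans of the corresponding column families intersect trivially. -/
theorem spans_disjoint_of_signature_zero_between
    {m n : ℕ} (A : Matrix (Fin m) (Fin n) ℝ) (Ap : Matrix (Fin n) (Fin m) ℝ)
    (h1 : A * Ap * A = A) (h2 : Ap * A * Ap = Ap)
    (h3 : (A * Ap)ᵀ = A * Ap) (h4 : (Ap * A)ᵀ = Ap * A)
    (S : Matrix (Fin n) (Fin n) ℝ) (hS : S = 1 - Ap * A)
    (τ : Set (Fin n))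
    (hsep : Submodule.span ℝ (Aᵀ '' τ) ⊓ Submodule.span ℝ (Aᵀ '' τᶜ) = ⊥)
    (Y₁ Y₂ : Set (Fin n)) (hne1 : Y₁.Nonempty) (hne2 : Y₂.Nonempty)
    (hdisj : Disjoint Y₁ Y₂) (hunion : Y₁ ∪ Y₂ = τ)
    (hzero : ∀ i ∈ Y₁, ∀ j ∈ Y₂, S i j = 0) :
    Submodule.span ℝ (Aᵀ '' Y₁) ⊓ Submodule.span ℝ (Aᵀ '' Y₂) = ⊥ :=
  spans_disjoint_of_signature_zero_between_general A Ap h1 h4 S hS Y₁ Y₂ hdisj hzero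
end

section
/- (Meyer's rank-1 update formula, generic case.) Let A be a real m×n matrix with Moore–Penrose pseudoinverse A⁺, let c ∈ ℝᵐ and d ∈ ℝⁿ. Define the column vector k = A⁺·c ∈ ℝⁿ, the row vector h = dᵀ·A⁺ ∈ ℝᵐ (as a row), the column vector u = (Iₘ − A·A⁺)·c ∈ ℝᵐ, the row vector v = dᵀ·(Iₙ − A⁺·A) ∈ ℝⁿ, and the scalar β = 1 + dᵀ·A⁺·c. Assume u ≠ 0 and v ≠ 0. Then the n×m matrix X = A⁺ − k·u† − v†·h + β·v†·u†, where for a nonzero vector w the pseudoinverse is w† = wᵀ/‖w‖² (with ‖·‖ the Euclidean norm), satisfies the four Penrose conditions for the matrix A + c·dᵀ: (A + c·dᵀ)·X·(A + c·dᵀ) = A + c·dᵀ, X·(A + c·dᵀ)·X = X, ((A + c·dᵀ)·X)ᵀ = (A + c·dᵀ)·X, and (X·(A + c·dᵀ))ᵀ = X·(A + c·dᵀ). In particular, X is the Moore–Penrose pseudoinverse of A + c·dᵀ. -/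
/-!
The Penrose equations for `A` give `uᵀ A = 0`, `A⁺ u = 0`, `A vᵀ = 0`, `c ⬝ u = u ⬝ u` and
`d ⬝ v = v ⬝ v`. Hence `A X = A A⁺ - (A A⁺ c) u†` and `dᵀ X = u†`, so
`(A + c dᵀ) X = A A⁺ + u u†`, a symmetric matrix. Replacing `(A, A⁺, c, d)` by `(Aᵀ, A⁺ᵀ, d, c)`
exchanges `u` with `vᵀ` and transposes `X`, so the same identity gives
`X (A + c dᵀ) = A⁺ A + v† v`. The other two Penrose equations follow by multiplying once more by
`A + c dᵀ`, resp. by `X`, using `X A A⁺ = A⁺ - v† h` and `X u = β v† - k`.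
-/

open Matrix

namespace Matrix

variable {K : Type*} {l m n : Type*} [Fintype m] [Fintype n]

-- `Matrix.vecMulVec_zero` is stated for square matrices only.
theorem vecMulVec_zero_right {α ι κ : Type*} [MulZeroClass α] (w : ι → α) :
    vecMulVec w (0 : κ → α) = 0 :=
  ext fun _ _ => mul_zero _

section CommRing

variable [CommRing K] {A : Matrix m n K} {Ap : Matrix n m K}

structure IsPenroseInverse (A : Matrix m n K) (Ap : Matrix n m K) : Prop where
  mul_pinv_mul : A * Ap * A = A
  pinv_mul_pinv : Ap * A * Ap = Ap
  transpose_mul_pinv : (A * Ap)ᵀ = A * Ap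
  transpose_pinv_mul : (Ap * A)ᵀ = Ap * A

theorem IsPenroseInverse.transpose (hA : IsPenroseInverse A Ap) : IsPenroseInverse Aᵀ Apᵀ where
  mul_pinv_mul := by rw [← transpose_mul, ← transpose_mul, ← Matrix.mul_assoc, hA.mul_pinv_mul]
  pinv_mul_pinv := by rw [← transpose_mul, ← transpose_mul, ← Matrix.mul_assoc, hA.pinv_mul_pinv]
  transpose_mul_pinv := by rw [← transpose_mul, transpose_transpose, hA.transpose_pinv_mul]
  transpose_pinv_mul := by rw [← transpose_mul, transpose_transpose, hA.transpose_mul_pinv]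

def residual (A : Matrix m n K) (Ap : Matrix n m K) (c : m → K) : m → K :=
  c - A *ᵥ (Ap *ᵥ c)

theorem residual_eq_one_sub_mul_mulVec [DecidableEq m] (c : m → K) :
    residual A Ap c = (1 - A * Ap) *ᵥ c := by
  rw [residual, sub_mulVec, one_mulVec, mulVec_mulVec]

theorem residual_transpose_eq_vecMul_one_sub [DecidableEq n] (d : n → K) :
    residual Aᵀ Apᵀ d = d ᵥ* (1 - Ap * A) := by
  rw [residual, mulVec_transpose, mulVec_transpose, vecMul_sub, vecMul_one, vecMul_vecMul]

theorem pinv_mulVec_residual_eq_zero (hA : IsPenroseInverse A Ap) (c : m → K) :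
    Ap *ᵥ residual A Ap c = 0 := by
  rw [residual, mulVec_sub, mulVec_mulVec, mulVec_mulVec, hA.pinv_mul_pinv, sub_self]

theorem residual_vecMul_eq_zero (hA : IsPenroseInverse A Ap) (c : m → K) :
    residual A Ap c ᵥ* A = 0 := by
  rw [residual, sub_vecMul, mulVec_mulVec, vecMul_mulVec, hA.transpose_mul_pinv, hA.mul_pinv_mul,
    sub_self]

theorem residual_dotProduct_self (hA : IsPenroseInverse A Ap) (c : m → K) :
    residual A Ap c ⬝ᵥ residual A Ap c = c ⬝ᵥ residual A Ap c := by
  nth_rw 1 [residual]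
  rw [sub_dotProduct, dotProduct_comm (A *ᵥ _), dotProduct_mulVec, residual_vecMul_eq_zero hA,
    zero_dotProduct, sub_zero]

end CommRing

section Field

variable [Field K] {A : Matrix m n K} {Ap : Matrix n m K}

def vecPinv (w : m → K) : m → K :=
  (w ⬝ᵥ w)⁻¹ • w

theorem dotProduct_vecPinv {w : m → K} (hw : w ⬝ᵥ w ≠ 0) : w ⬝ᵥ vecPinv w = 1 := by
  rw [vecPinv, dotProduct_smul, smul_eq_mul, inv_mul_cancel₀ hw]

theorem vecMulVec_vecPinv_comm (w : m → K) :
    vecMulVec (vecPinv w) w = vecMulVec w (vecPinv w) := by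
  rw [vecPinv, smul_vecMulVec, vecMulVec_smul]

theorem vecPinv_vecMul_eq_zero {w : m → K} {M : Matrix m l K} (h : w ᵥ* M = 0) :
    vecPinv w ᵥ* M = 0 := by
  rw [vecPinv, smul_vecMul, h, smul_zero]

theorem mulVec_vecPinv_eq_zero {w : n → K} {M : Matrix l n K} (h : M *ᵥ w = 0) :
    M *ᵥ vecPinv w = 0 := by
  rw [vecPinv, mulVec_smul, h, smul_zero]

theorem dotProduct_vecPinv_residual (hA : IsPenroseInverse A Ap) {c : m → K}
    (hc : residual A Ap c ⬝ᵥ residual A Ap c ≠ 0) : c ⬝ᵥ vecPinv (residual A Ap c) = 1 := by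
  rw [vecPinv, dotProduct_smul, ← residual_dotProduct_self hA, smul_eq_mul, inv_mul_cancel₀ hc]

variable (A Ap) in
/-- Meyer's `A⁺ - k u† - v† h + β v† u†`, with `u = residual A A⁺ c` and
`v = residual Aᵀ A⁺ᵀ d = (1 - A⁺ A)ᵀ d`. -/
def meyerUpdate (c : m → K) (d : n → K) : Matrix n m K :=
  Ap - vecMulVec (Ap *ᵥ c) (vecPinv (residual A Ap c))
    - vecMulVec (vecPinv (residual Aᵀ Apᵀ d)) (d ᵥ* Ap)
    + (1 + d ⬝ᵥ Ap *ᵥ c) • vecMulVec (vecPinv (residual Aᵀ Apᵀ d)) (vecPinv (residual A Ap c))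

variable (c : m → K) (d : n → K)

theorem transpose_meyerUpdate : (meyerUpdate A Ap c d)ᵀ = meyerUpdate Aᵀ Apᵀ d c := by
  simp only [meyerUpdate, transpose_add, transpose_sub, transpose_smul, transpose_vecMulVec,
    transpose_transpose, mulVec_transpose, vecMul_transpose]
  rw [dotProduct_comm c, ← dotProduct_mulVec, sub_right_comm]

theorem mul_meyerUpdate (hA : IsPenroseInverse A Ap) :
    A * meyerUpdate A Ap c d =
      A * Ap - vecMulVec (A *ᵥ (Ap *ᵥ c)) (vecPinv (residual A Ap c)) := by
  have hAv : A *ᵥ vecPinv (residual Aᵀ Apᵀ d) = 0 := by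
    refine mulVec_vecPinv_eq_zero ?_
    rw [← vecMul_transpose, residual_vecMul_eq_zero hA.transpose]
  simp only [meyerUpdate, Matrix.mul_add, Matrix.mul_sub, Matrix.mul_smul, mul_vecMulVec, hAv,
    zero_vecMulVec, smul_zero, sub_zero, add_zero]

theorem vecMul_meyerUpdate (hA : IsPenroseInverse A Ap)
    (hv : residual Aᵀ Apᵀ d ⬝ᵥ residual Aᵀ Apᵀ d ≠ 0) :
    d ᵥ* meyerUpdate A Ap c d = vecPinv (residual A Ap c) := by
  simp only [meyerUpdate, vecMul_add, vecMul_sub, vecMul_smul, vecMul_vecMulVec,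
    dotProduct_vecPinv_residual hA.transpose hv]
  module

theorem add_vecMulVec_mul_meyerUpdate (hA : IsPenroseInverse A Ap)
    (hv : residual Aᵀ Apᵀ d ⬝ᵥ residual Aᵀ Apᵀ d ≠ 0) :
    (A + vecMulVec c d) * meyerUpdate A Ap c d =
      A * Ap + vecMulVec (residual A Ap c) (vecPinv (residual A Ap c)) := by
  rw [Matrix.add_mul, mul_meyerUpdate c d hA, vecMulVec_mul, vecMul_meyerUpdate c d hA hv,
    residual, sub_vecMulVec]
  abel

theorem meyerUpdate_mul_add_vecMulVec (hA : IsPenroseInverse A Ap)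
    (hu : residual A Ap c ⬝ᵥ residual A Ap c ≠ 0) :
    meyerUpdate A Ap c d * (A + vecMulVec c d) =
      Ap * A + vecMulVec (vecPinv (residual Aᵀ Apᵀ d)) (residual Aᵀ Apᵀ d) := by
  have hu' : residual Aᵀᵀ Apᵀᵀ c ⬝ᵥ residual Aᵀᵀ Apᵀᵀ c ≠ 0 := by
    rwa [transpose_transpose, transpose_transpose]
  rw [← transpose_transpose (_ * _), transpose_mul, transpose_add, transpose_vecMulVec,
    transpose_meyerUpdate, add_vecMulVec_mul_meyerUpdate d c hA.transpose hu', transpose_add,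
    ← transpose_mul, transpose_transpose, transpose_vecMulVec]

theorem meyerUpdate_mul_mul_pinv (hA : IsPenroseInverse A Ap) :
    meyerUpdate A Ap c d * (A * Ap) = Ap - vecMulVec (vecPinv (residual Aᵀ Apᵀ d)) (d ᵥ* Ap) := by
  have hu_AAp : vecPinv (residual A Ap c) ᵥ* (A * Ap) = 0 := by
    rw [← vecMul_vecMul, vecPinv_vecMul_eq_zero (residual_vecMul_eq_zero hA c), zero_vecMul]
  have hh_AAp : d ᵥ* Ap ᵥ* (A * Ap) = d ᵥ* Ap := by
    rw [vecMul_vecMul, ← Matrix.mul_assoc, hA.pinv_mul_pinv]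
  rw [meyerUpdate, Matrix.add_mul, Matrix.sub_mul, Matrix.sub_mul, Matrix.smul_mul, vecMulVec_mul,
    vecMulVec_mul, vecMulVec_mul, hu_AAp, hh_AAp, ← Matrix.mul_assoc, hA.pinv_mul_pinv,
    vecMulVec_zero_right, vecMulVec_zero_right, smul_zero, sub_zero, add_zero]

theorem meyerUpdate_mulVec_residual (hA : IsPenroseInverse A Ap)
    (hu : residual A Ap c ⬝ᵥ residual A Ap c ≠ 0) :
    meyerUpdate A Ap c d *ᵥ residual A Ap c =
      (1 + d ⬝ᵥ Ap *ᵥ c) • vecPinv (residual Aᵀ Apᵀ d) - Ap *ᵥ c := by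
  have hh_u : d ᵥ* Ap ⬝ᵥ residual A Ap c = 0 := by
    rw [← dotProduct_mulVec, pinv_mulVec_residual_eq_zero hA, dotProduct_zero]
  simp only [meyerUpdate, add_mulVec, sub_mulVec, smul_mulVec, vecMulVec_mulVec,
    op_smul_eq_smul, pinv_mulVec_residual_eq_zero hA, dotProduct_comm (vecPinv _),
    dotProduct_vecPinv hu, hh_u]
  module

theorem isPenroseInverse_meyerUpdate (hA : IsPenroseInverse A Ap)
    (hu : residual A Ap c ⬝ᵥ residual A Ap c ≠ 0)
    (hv : residual Aᵀ Apᵀ d ⬝ᵥ residual Aᵀ Apᵀ d ≠ 0) :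
    IsPenroseInverse (A + vecMulVec c d) (meyerUpdate A Ap c d) where
  mul_pinv_mul := by
    have hu_A : vecPinv (residual A Ap c) ᵥ* A = 0 :=
      vecPinv_vecMul_eq_zero (residual_vecMul_eq_zero hA c)
    have hu_c : vecPinv (residual A Ap c) ⬝ᵥ c = 1 := by
      rw [dotProduct_comm, dotProduct_vecPinv_residual hA hu]
    rw [add_vecMulVec_mul_meyerUpdate c d hA hv, Matrix.add_mul, Matrix.mul_add, Matrix.mul_add,
      hA.mul_pinv_mul, mul_vecMulVec, vecMulVec_mul, vecMulVec_mul_vecMulVec, hu_A, hu_c,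
      vecMulVec_zero_right, one_smul, zero_add, ← mulVec_mulVec, residual, sub_vecMulVec]
    abel
  pinv_mul_pinv := by
    rw [Matrix.mul_assoc, add_vecMulVec_mul_meyerUpdate c d hA hv, Matrix.mul_add, mul_vecMulVec,
      meyerUpdate_mul_mul_pinv c d hA, meyerUpdate_mulVec_residual c d hA hu, sub_vecMulVec,
      smul_vecMulVec, meyerUpdate]
    abel
  transpose_mul_pinv := by
    rw [add_vecMulVec_mul_meyerUpdate c d hA hv, transpose_add, hA.transpose_mul_pinv,
      transpose_vecMulVec, vecMulVec_vecPinv_comm]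
  transpose_pinv_mul := by
    rw [meyerUpdate_mul_add_vecMulVec c d hA hu, transpose_add, hA.transpose_pinv_mul,
      transpose_vecMulVec, vecMulVec_vecPinv_comm]

end Field

end Matrix

/-- Meyer's rank-one update formula for the Moore–Penrose pseudoinverse,
generic case `u ≠ 0`, `v ≠ 0`:
`(A + c dᵀ)⁺ = A⁺ - k u† - v† h + β v† u†`. -/
theorem meyer_rank_one_update_generic
    {m n : ℕ} (A : Matrix (Fin m) (Fin n) ℝ) (Ap : Matrix (Fin n) (Fin m) ℝ)
    (h1 : A * Ap * A = A) (h2 : Ap * A * Ap = Ap)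
    (h3 : (A * Ap)ᵀ = A * Ap) (h4 : (Ap * A)ᵀ = Ap * A)
    (c : Fin m → ℝ) (d : Fin n → ℝ)
    (k : Fin n → ℝ) (hk : k = Ap.mulVec c)
    (h : Fin m → ℝ) (hh : h = Matrix.vecMul d Ap)
    (u : Fin m → ℝ) (hu : u = ((1 : Matrix (Fin m) (Fin m) ℝ) - A * Ap).mulVec c)
    (v : Fin n → ℝ) (hv : v = Matrix.vecMul d ((1 : Matrix (Fin n) (Fin n) ℝ) - Ap * A))
    (β : ℝ) (hβ : β = 1 + d ⬝ᵥ Ap.mulVec c)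
    (hu0 : u ≠ 0) (hv0 : v ≠ 0)
    (X : Matrix (Fin n) (Fin m) ℝ)
    (hX : X = Ap - vecMulVec k ((u ⬝ᵥ u)⁻¹ • u) - vecMulVec ((v ⬝ᵥ v)⁻¹ • v) h
        + β • vecMulVec ((v ⬝ᵥ v)⁻¹ • v) ((u ⬝ᵥ u)⁻¹ • u)) :
    (A + vecMulVec c d) * X * (A + vecMulVec c d) = A + vecMulVec c d ∧
    X * (A + vecMulVec c d) * X = X ∧
    ((A + vecMulVec c d) * X)ᵀ = (A + vecMulVec c d) * X ∧
    (X * (A + vecMulVec c d))ᵀ = X * (A + vecMulVec c d) := by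
  have hu' : u = residual A Ap c := hu.trans (residual_eq_one_sub_mul_mulVec c).symm
  have hv' : v = residual Aᵀ Apᵀ d := hv.trans (residual_transpose_eq_vecMul_one_sub d).symm
  have hX' : X = meyerUpdate A Ap c d := by rw [hX, hk, hh, hβ, hu', hv']; rfl
  subst hu' hv' hX'
  obtain ⟨hB1, hB2, hB3, hB4⟩ := isPenroseInverse_meyerUpdate c d ⟨h1, h2, h3, h4⟩
    (dotProduct_self_eq_zero.not.mpr hu0) (dotProduct_self_eq_zero.not.mpr hv0)
  exact ⟨hB1, hB2, hB3, hB4⟩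
end

section
/- Let A be a real m×n matrix with columns F₁,…,Fₙ and Moore–Penrose pseudoinverse A⁺. Let c ∈ ℝᵐ be a vector that does not lie in the column space of A, let b ∈ ℝᵐ lie in the column space of A, and let j be a column index such that the row vector v = e_jᵀ·(Iₙ − A⁺·A) is nonzero (i.e., column F_j participates in a dependence relation). Let B⁺ be a Moore–Penrose pseudoinverse of the perturbed matrix à = A + c·e_jᵀ, and set x = A⁺·b and x̃ = B⁺·b. If τ is a span-separated subset of column indices (span{F_k : k ∈ τ} ∩ span{F_i : i ∉ τ} = {0}) with j ∈ τ, then for every index i ∉ τ one has x_i = x̃_i. -/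
/-!
Let `M = A + c e_jᵀ`. Because some kernel vector of `A` (a column of `1 - A⁺A`) has a nonzero
`j`-th entry, `b` has a preimage under `A` with vanishing `j`-th entry, so `b` lies in the range
of `M` as well and `M x' = A x' + x'_j c = b`. As `c` is not in the range of `A`, this forces
`x'_j = 0`, hence `A x' = b = A x`. The part `d` of `x' - x` supported off `τ` then satisfies
`A d = 0` by span separation, and `M d = 0` because `d_j = 0`. Since `A⁺A` and `B⁺M` are
symmetric, `x` and `x'` are orthogonal to the kernels of `A` and `M` respectively, so
`d ⬝ d = (x' - x) ⬝ d = 0`.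
-/

open Matrix

section

variable {R : Type*} {m n : Type*} [Fintype n]

theorem Matrix.add_vecMulVec_single_mulVec [CommSemiring R] [DecidableEq n]
    (A : Matrix m n R) (c : m → R) (j : n) (z : n → R) :
    (A + vecMulVec c (Pi.single j 1)) *ᵥ z = A *ᵥ z + z j • c := by
  rw [add_mulVec, vecMulVec_mulVec, single_one_dotProduct, op_smul_eq_smul]

theorem Matrix.mulVec_mem_span_transpose_image [CommSemiring R] (A : Matrix m n R)
    {S : Set n} {z : n → R} (hz : ∀ i ∉ S, z i = 0) :
    A *ᵥ z ∈ Submodule.span R (Aᵀ '' S) := by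
  simp only [mulVec_eq_sum, op_smul_eq_smul]
  refine Submodule.sum_mem _ fun k _ => ?_
  by_cases hk : k ∈ S
  · exact Submodule.smul_mem _ _ (Submodule.subset_span ⟨k, hk, rfl⟩)
  · simp [hz k hk]

theorem Matrix.mulVec_indicator_compl_eq_zero [CommRing R] {A : Matrix m n R} {τ : Set n}
    (hsep : Submodule.span R (Aᵀ '' τ) ⊓ Submodule.span R (Aᵀ '' τᶜ) = ⊥)
    {d : n → R} (hd : A *ᵥ d = 0) :
    A *ᵥ τᶜ.indicator d = 0 := by
  have hsplit : A *ᵥ τᶜ.indicator d = -(A *ᵥ τ.indicator d) := by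
    rw [eq_neg_iff_add_eq_zero, add_comm, ← mulVec_add, Set.indicator_self_add_compl, hd]
  have hτ : A *ᵥ τ.indicator d ∈ Submodule.span R (Aᵀ '' τ) :=
    A.mulVec_mem_span_transpose_image fun i hi => Set.indicator_of_notMem hi d
  have hτc : A *ᵥ τᶜ.indicator d ∈ Submodule.span R (Aᵀ '' τᶜ) :=
    A.mulVec_mem_span_transpose_image fun i hi => Set.indicator_of_notMem hi d
  have hmem : A *ᵥ τᶜ.indicator d ∈ Submodule.span R (Aᵀ '' τ) ⊓ Submodule.span R (Aᵀ '' τᶜ) :=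
    ⟨hsplit ▸ Submodule.neg_mem _ hτ, hτc⟩
  rwa [hsep, Submodule.mem_bot] at hmem

theorem Matrix.mulVec_mulVec_eq_of_mul_mul_eq [CommSemiring R] [Fintype m]
    {M : Matrix m n R} {G : Matrix n m R} (hG : M * G * M = M)
    {b : m → R} (hb : b ∈ LinearMap.range M.mulVecLin) :
    M *ᵥ (G *ᵥ b) = b := by
  obtain ⟨y, rfl⟩ := hb
  rw [mulVecLin_apply, mulVec_mulVec, mulVec_mulVec, hG]

theorem Matrix.mulVec_dotProduct_eq_zero_of_mulVec_eq_zero [CommSemiring R] [Fintype m]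
    {M : Matrix m n R} {G : Matrix n m R} (hG : (G * M)ᵀ = G * M)
    {b : m → R} (hb : b ∈ LinearMap.range M.mulVecLin) {u : n → R} (hu : M *ᵥ u = 0) :
    G *ᵥ b ⬝ᵥ u = 0 := by
  obtain ⟨y, rfl⟩ := hb
  rw [mulVecLin_apply, mulVec_mulVec, dotProduct_comm, dotProduct_mulVec, ← hG, vecMul_transpose,
    ← mulVec_mulVec, hu, mulVec_zero, zero_dotProduct]

theorem Matrix.exists_mulVec_eq_zero_apply_ne_zero [CommRing R] [Fintype m] [DecidableEq n]
    {A : Matrix m n R} {G : Matrix n m R} (hG : A * G * A = A) {j : n}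
    (hj : (1 - G * A : Matrix n n R) j ≠ 0) :
    ∃ u, A *ᵥ u = 0 ∧ u j ≠ 0 := by
  obtain ⟨k, hk⟩ := Function.ne_iff.mp hj
  refine ⟨(1 - G * A) *ᵥ Pi.single k 1, ?_, ?_⟩
  · rw [mulVec_mulVec, Matrix.mul_sub, Matrix.mul_one, ← Matrix.mul_assoc, hG, sub_self,
      zero_mulVec]
  · simpa [mulVec_single_one] using hk

theorem Matrix.exists_mulVec_eq_apply_eq_zero [Field R] {A : Matrix m n R} {j : n} {u : n → R}
    (hu : A *ᵥ u = 0) (huj : u j ≠ 0) {b : m → R} (hb : b ∈ LinearMap.range A.mulVecLin) :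
    ∃ z, A *ᵥ z = b ∧ z j = 0 := by
  obtain ⟨y, rfl⟩ := hb
  refine ⟨y - (y j / u j) • u, ?_, ?_⟩
  · rw [mulVecLin_apply, mulVec_sub, mulVec_smul, hu, smul_zero, sub_zero]
  · simp [huj]

theorem Matrix.apply_eq_zero_of_add_vecMulVec_single_mulVec_mem_range [Field R] [DecidableEq n]
    {A : Matrix m n R} {c : m → R} (hc : c ∉ LinearMap.range A.mulVecLin) {j : n} {x : n → R}
    (hx : (A + vecMulVec c (Pi.single j 1)) *ᵥ x ∈ LinearMap.range A.mulVecLin) :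
    x j = 0 := by
  by_contra hxj
  rw [add_vecMulVec_single_mulVec] at hx
  have hAx : A *ᵥ x ∈ LinearMap.range A.mulVecLin := ⟨x, rfl⟩
  refine hc ((Submodule.smul_mem_iff _ hxj).mp ?_)
  simpa using Submodule.sub_mem _ hx hAx

theorem Set.indicator_eq_zero_of_dotProduct_indicator_eq_zero [Ring R] [LinearOrder R]
    [IsStrictOrderedRing R] {s : Set n} {v : n → R} (hv : v ⬝ᵥ s.indicator v = 0) :
    s.indicator v = 0 := by
  refine dotProduct_self_eq_zero.mp (Eq.trans (Finset.sum_congr rfl fun i _ => ?_) hv)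
  by_cases hi : i ∈ s <;> simp [hi]

end

theorem perturbation_fixes_solution_outside_cluster_general
    {m n : ℕ} (A : Matrix (Fin m) (Fin n) ℝ) (Ap : Matrix (Fin n) (Fin m) ℝ)
    (h1 : A * Ap * A = A) (h4 : (Ap * A)ᵀ = Ap * A)
    (c : Fin m → ℝ) (hc : c ∉ LinearMap.range A.mulVecLin)
    (b : Fin m → ℝ) (hb : b ∈ LinearMap.range A.mulVecLin)
    (j : Fin n)
    (hv : ((1 : Matrix (Fin n) (Fin n) ℝ) - Ap * A) j ≠ 0)
    (Bp : Matrix (Fin n) (Fin m) ℝ)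
    (hb1 : (A + vecMulVec c (Pi.single j 1)) * Bp * (A + vecMulVec c (Pi.single j 1))
        = A + vecMulVec c (Pi.single j 1))
    (hb4 : (Bp * (A + vecMulVec c (Pi.single j 1)))ᵀ = Bp * (A + vecMulVec c (Pi.single j 1)))
    (x x' : Fin n → ℝ) (hx : x = Ap.mulVec b) (hx' : x' = Bp.mulVec b)
    (τ : Set (Fin n)) (hjτ : j ∈ τ)
    (hsep : Submodule.span ℝ (Aᵀ '' τ) ⊓ Submodule.span ℝ (Aᵀ '' τᶜ) = ⊥) :
    ∀ i ∉ τ, x i = x' i := by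
  intro i hi
  set M := A + vecMulVec c (Pi.single j 1)
  obtain ⟨u, hAu, huj⟩ := exists_mulVec_eq_zero_apply_ne_zero h1 hv
  obtain ⟨z, hAz, hzj⟩ := exists_mulVec_eq_apply_eq_zero hAu huj hb
  have hbM : b ∈ LinearMap.range M.mulVecLin :=
    ⟨z, by rw [mulVecLin_apply, add_vecMulVec_single_mulVec, hzj, zero_smul, add_zero, hAz]⟩
  have hMx' : M *ᵥ x' = b := hx' ▸ mulVec_mulVec_eq_of_mul_mul_eq hb1 hbM
  have hx'j : x' j = 0 := apply_eq_zero_of_add_vecMulVec_single_mulVec_mem_range hc (hMx' ▸ hb)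
  have hAx' : A *ᵥ x' = b := by
    rwa [add_vecMulVec_single_mulVec, hx'j, zero_smul, add_zero] at hMx'
  have hAx : A *ᵥ x = b := hx ▸ mulVec_mulVec_eq_of_mul_mul_eq h1 hb
  set d := τᶜ.indicator (x' - x)
  have hAd : A *ᵥ d = 0 :=
    mulVec_indicator_compl_eq_zero hsep (by rw [mulVec_sub, hAx, hAx', sub_self])
  have hdj : d j = 0 := Set.indicator_of_notMem (Set.notMem_compl_iff.mpr hjτ) _
  have hMd : M *ᵥ d = 0 := by rw [add_vecMulVec_single_mulVec, hAd, hdj, zero_smul, add_zero]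
  have hd : (x' - x) ⬝ᵥ d = 0 := by
    rw [sub_dotProduct, hx, hx', mulVec_dotProduct_eq_zero_of_mulVec_eq_zero hb4 hbM hMd,
      mulVec_dotProduct_eq_zero_of_mulVec_eq_zero h4 hb hAd, sub_zero]
  have hd0 := congrFun (Set.indicator_eq_zero_of_dotProduct_indicator_eq_zero hd) i
  rw [Set.indicator_of_mem hi, Pi.sub_apply, Pi.zero_apply, sub_eq_zero] at hd0
  exact hd0.symm

/-- Perturbing a column `F_j` of `A` by a vector `c` outside the column space
of `A` does not change the components of the minimum-norm least-squares
solution corresponding to columns outside any span-separated set `τ`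
containing `j`. -/
theorem perturbation_fixes_solution_outside_cluster
    {m n : ℕ} (A : Matrix (Fin m) (Fin n) ℝ) (Ap : Matrix (Fin n) (Fin m) ℝ)
    (h1 : A * Ap * A = A) (h2 : Ap * A * Ap = Ap)
    (h3 : (A * Ap)ᵀ = A * Ap) (h4 : (Ap * A)ᵀ = Ap * A)
    (c : Fin m → ℝ) (hc : c ∉ LinearMap.range A.mulVecLin)
    (b : Fin m → ℝ) (hb : b ∈ LinearMap.range A.mulVecLin)
    (j : Fin n)
    (hv : ((1 : Matrix (Fin n) (Fin n) ℝ) - Ap * A) j ≠ 0)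
    (Bp : Matrix (Fin n) (Fin m) ℝ)
    (hb1 : (A + vecMulVec c (Pi.single j 1)) * Bp * (A + vecMulVec c (Pi.single j 1))
        = A + vecMulVec c (Pi.single j 1))
    (hb2 : Bp * (A + vecMulVec c (Pi.single j 1)) * Bp = Bp)
    (hb3 : ((A + vecMulVec c (Pi.single j 1)) * Bp)ᵀ = (A + vecMulVec c (Pi.single j 1)) * Bp)
    (hb4 : (Bp * (A + vecMulVec c (Pi.single j 1)))ᵀ = Bp * (A + vecMulVec c (Pi.single j 1)))
    (x x' : Fin n → ℝ) (hx : x = Ap.mulVec b) (hx' : x' = Bp.mulVec b)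
    (τ : Set (Fin n)) (hjτ : j ∈ τ)
    (hsep : Submodule.span ℝ (Aᵀ '' τ) ⊓ Submodule.span ℝ (Aᵀ '' τᶜ) = ⊥) :
    ∀ i ∉ τ, x i = x' i :=
  perturbation_fixes_solution_outside_cluster_general A Ap h1 h4 c hc b hb j hv Bp hb1 hb4 x x' hx
    hx' τ hjτ hsep
end

section
/- Let A be a real m×n matrix with Moore–Penrose pseudoinverse A⁺. Let c ∈ ℝᵐ be a vector that does not lie in the column space of A, let b ∈ ℝᵐ lie in the column space of A, and let j be a column index such that the row vector v = e_jᵀ·(Iₙ − A⁺·A) is nonzero. Let B⁺ be a Moore–Penrose pseudoinverse of à = A + c·e_jᵀ, and set x = A⁺·b and x̃ = B⁺·b. Then x − x̃ = (x_j/‖v‖²)·vᵀ; consequently ‖x − x̃‖ = |x_j|/‖v‖, and in particular if x_j = 0 then x̃ = x. -/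
/-!
For a matrix `M` and any `M⁺` with `M M⁺ M = M` and `M⁺ M` symmetric, `M⁺ (M y) = y` whenever
`y ⊥ ker M`: the defect `y - M⁺ M y` lies in `ker M` and is orthogonal to itself.
Since `c ∉ col A`, the kernel of `Ã = A + c e_jᵀ` is `ker A ∩ {y_j = 0}`. The vector
`v = (I - A⁺A) e_j` lies in `ker A` and satisfies `v ⬝ y = y_j` on `ker A` (so `v_j = ‖v‖²`),
while `x = A⁺ b ⊥ ker A`. Hence `x̃ = x - (x_j / ‖v‖²) v` solves `Ã x̃ = b` and is orthogonal
to `ker Ã`, so `B⁺ b = x̃`.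
-/

open Matrix

namespace Matrix

variable {m n R : Type*} [Fintype n]

section CommRing

variable [Fintype m] [CommRing R] {M : Matrix m n R} {Mp : Matrix n m R}

theorem mulVec_mulVec_dotProduct_eq_zero (h4 : (Mp * M)ᵀ = Mp * M) (z : n → R) {y : n → R}
    (hy : M *ᵥ y = 0) : Mp *ᵥ (M *ᵥ z) ⬝ᵥ y = 0 := by
  rw [mulVec_mulVec, ← vecMul_transpose, h4, ← dotProduct_mulVec, ← mulVec_mulVec, hy,
    mulVec_zero, dotProduct_zero]

theorem mulVec_mulVec_eq_self_of_orthogonal_ker [LinearOrder R] [IsStrictOrderedRing R]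
    (h1 : M * Mp * M = M) (h4 : (Mp * M)ᵀ = Mp * M) {y : n → R}
    (hy : ∀ z, M *ᵥ z = 0 → y ⬝ᵥ z = 0) : Mp *ᵥ (M *ᵥ y) = y := by
  set d := y - Mp *ᵥ (M *ᵥ y)
  have hd : M *ᵥ d = 0 := by
    rw [mulVec_sub, mulVec_mulVec, mulVec_mulVec, h1, sub_self]
  have hdd : d ⬝ᵥ d = 0 := by
    rw [sub_dotProduct, hy d hd, mulVec_mulVec_dotProduct_eq_zero h4 y hd, sub_zero]
  exact (sub_eq_zero.mp (dotProduct_self_eq_zero.mp hdd)).symm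

variable [DecidableEq n]

theorem mulVec_row_one_sub_mul_eq_zero (h1 : M * Mp * M = M) (h4 : (Mp * M)ᵀ = Mp * M)
    (j : n) : M *ᵥ (1 - Mp * M : Matrix n n R) j = 0 := by
  have hsymm : (1 - Mp * M)ᵀ = 1 - Mp * M := by rw [transpose_sub, transpose_one, h4]
  have hrow : (1 - Mp * M : Matrix n n R) j = (1 - Mp * M) *ᵥ Pi.single j 1 := by
    conv_rhs => rw [← hsymm, mulVec_transpose, single_one_vecMul]
    rfl
  rw [hrow, mulVec_mulVec, Matrix.mul_sub, Matrix.mul_one, ← Matrix.mul_assoc, h1, sub_self,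
    zero_mulVec]

theorem row_one_sub_mul_dotProduct_of_mulVec_eq_zero {y : n → R} (hy : M *ᵥ y = 0) (j : n) :
    (1 - Mp * M : Matrix n n R) j ⬝ᵥ y = y j := by
  change ((1 - Mp * M : Matrix n n R) *ᵥ y) j = y j
  rw [sub_mulVec, one_mulVec, ← mulVec_mulVec, hy, mulVec_zero, sub_zero]

end CommRing

theorem add_vecMulVec_single_mulVec_sub_smul [CommRing R] [DecidableEq n] (A : Matrix m n R)
    (c : m → R) {j : n} {x v : n → R} {a : R} (hv : A *ᵥ v = 0) (ha : a * v j = x j) :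
    (A + vecMulVec c (Pi.single j 1)) *ᵥ (x - a • v) = A *ᵥ x := by
  rw [add_mulVec, vecMulVec_mulVec, single_dotProduct, one_mul, op_smul_eq_smul, mulVec_sub,
    mulVec_smul, hv, smul_zero, sub_zero, Pi.sub_apply, Pi.smul_apply, smul_eq_mul, ha,
    sub_self, zero_smul, add_zero]

theorem add_vecMulVec_single_mulVec_eq_zero [Field R] [DecidableEq n] {A : Matrix m n R}
    {c : m → R} (hc : c ∉ LinearMap.range A.mulVecLin) {j : n} {y : n → R}
    (hy : (A + vecMulVec c (Pi.single j 1)) *ᵥ y = 0) : A *ᵥ y = 0 ∧ y j = 0 := by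
  rw [add_mulVec, vecMulVec_mulVec, single_dotProduct, one_mul, op_smul_eq_smul] at hy
  have hyj : y j = 0 := by
    by_contra hyj
    refine hc ⟨-(y j)⁻¹ • y, ?_⟩
    rw [mulVecLin_apply, mulVec_smul, eq_neg_of_add_eq_zero_left hy, smul_neg, neg_smul, neg_neg,
      smul_smul, inv_mul_cancel₀ hyj, one_smul]
  refine ⟨?_, hyj⟩
  simpa [hyj] using hy

theorem sqrt_smul_dotProduct_smul (a : ℝ) (v : n → ℝ) :
    Real.sqrt ((a • v) ⬝ᵥ (a • v)) = |a| * Real.sqrt (v ⬝ᵥ v) := by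
  rw [smul_dotProduct, dotProduct_smul, smul_smul, smul_eq_mul, ← sq,
    Real.sqrt_mul (sq_nonneg a), Real.sqrt_sq_eq_abs]

end Matrix

theorem perturbation_solution_difference_formula_general
    {m n : ℕ} (A : Matrix (Fin m) (Fin n) ℝ) (Ap : Matrix (Fin n) (Fin m) ℝ)
    (h1 : A * Ap * A = A) (h4 : (Ap * A)ᵀ = Ap * A)
    (c : Fin m → ℝ) (hc : c ∉ LinearMap.range A.mulVecLin)
    (b : Fin m → ℝ) (hb : b ∈ LinearMap.range A.mulVecLin)
    (j : Fin n)
    (v : Fin n → ℝ) (hv : v = ((1 : Matrix (Fin n) (Fin n) ℝ) - Ap * A) j)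
    (hv0 : v ≠ 0)
    (Bp : Matrix (Fin n) (Fin m) ℝ)
    (hb1 : (A + vecMulVec c (Pi.single j 1)) * Bp * (A + vecMulVec c (Pi.single j 1))
        = A + vecMulVec c (Pi.single j 1))
    (hb4 : (Bp * (A + vecMulVec c (Pi.single j 1)))ᵀ = Bp * (A + vecMulVec c (Pi.single j 1)))
    (x x' : Fin n → ℝ) (hx : x = Ap.mulVec b) (hx' : x' = Bp.mulVec b) :
    x - x' = (x j / (v ⬝ᵥ v)) • v ∧
    Real.sqrt ((x - x') ⬝ᵥ (x - x')) = |x j| / Real.sqrt (v ⬝ᵥ v) ∧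
    (x j = 0 → x' = x) := by
  obtain ⟨z, rfl⟩ := hb
  rw [mulVecLin_apply] at hx hx'
  have hAx : A *ᵥ x = A *ᵥ z := by rw [hx, mulVec_mulVec, mulVec_mulVec, h1]
  have hAv : A *ᵥ v = 0 := hv ▸ mulVec_row_one_sub_mul_eq_zero h1 h4 j
  have hv_dot : ∀ y, A *ᵥ y = 0 → v ⬝ᵥ y = y j := fun y hy =>
    hv ▸ row_one_sub_mul_dotProduct_of_mulVec_eq_zero hy j
  have hvv : 0 < v ⬝ᵥ v := by simpa using dotProduct_self_star_pos_iff.mpr hv0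
  have hvj : v j = v ⬝ᵥ v := (hv_dot v hAv).symm
  have hx' : x' = x - (x j / (v ⬝ᵥ v)) • v := by
    have hsol : (A + vecMulVec c (Pi.single j 1)) *ᵥ (x - (x j / (v ⬝ᵥ v)) • v) = A *ᵥ z := by
      rw [add_vecMulVec_single_mulVec_sub_smul A c hAv (by rw [hvj, div_mul_cancel₀ _ hvv.ne']),
        hAx]
    rw [hx', ← hsol]
    refine mulVec_mulVec_eq_self_of_orthogonal_ker hb1 hb4 fun y hy => ?_
    obtain ⟨hAy, hyj⟩ := add_vecMulVec_single_mulVec_eq_zero hc hy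
    rw [sub_dotProduct, smul_dotProduct, hv_dot y hAy, hyj, hx,
      mulVec_mulVec_dotProduct_eq_zero h4 z hAy, smul_zero, sub_zero]
  have hdiff : x - x' = (x j / (v ⬝ᵥ v)) • v := by rw [hx', sub_sub_cancel]
  refine ⟨hdiff, ?_, fun h => ?_⟩
  · rw [hdiff, sqrt_smul_dotProduct_smul, abs_div, abs_of_pos hvv, div_mul_eq_mul_div,
      div_eq_div_iff hvv.ne' (Real.sqrt_pos.2 hvv).ne', mul_assoc, Real.mul_self_sqrt hvv.le]
  · rw [hx', h, zero_div, zero_smul, sub_zero]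

/-- Perturbing column `F_j` of `A` by a vector `c` outside the column space of
`A` changes the minimum-norm least-squares solution by exactly
`(x_j/‖v‖²) vᵀ`, where `v = e_jᵀ(I - A⁺A)`; hence `‖x - x̃‖ = |x_j|/‖v‖` and
`x̃ = x` whenever `x_j = 0`. -/
theorem perturbation_solution_difference_formula
    {m n : ℕ} (A : Matrix (Fin m) (Fin n) ℝ) (Ap : Matrix (Fin n) (Fin m) ℝ)
    (h1 : A * Ap * A = A) (h2 : Ap * A * Ap = Ap)
    (h3 : (A * Ap)ᵀ = A * Ap) (h4 : (Ap * A)ᵀ = Ap * A)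
    (c : Fin m → ℝ) (hc : c ∉ LinearMap.range A.mulVecLin)
    (b : Fin m → ℝ) (hb : b ∈ LinearMap.range A.mulVecLin)
    (j : Fin n)
    (v : Fin n → ℝ) (hv : v = ((1 : Matrix (Fin n) (Fin n) ℝ) - Ap * A) j)
    (hv0 : v ≠ 0)
    (Bp : Matrix (Fin n) (Fin m) ℝ)
    (hb1 : (A + vecMulVec c (Pi.single j 1)) * Bp * (A + vecMulVec c (Pi.single j 1))
        = A + vecMulVec c (Pi.single j 1))
    (hb2 : Bp * (A + vecMulVec c (Pi.single j 1)) * Bp = Bp)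
    (hb3 : ((A + vecMulVec c (Pi.single j 1)) * Bp)ᵀ = (A + vecMulVec c (Pi.single j 1)) * Bp)
    (hb4 : (Bp * (A + vecMulVec c (Pi.single j 1)))ᵀ = Bp * (A + vecMulVec c (Pi.single j 1)))
    (x x' : Fin n → ℝ) (hx : x = Ap.mulVec b) (hx' : x' = Bp.mulVec b) :
    x - x' = (x j / (v ⬝ᵥ v)) • v ∧
    Real.sqrt ((x - x') ⬝ᵥ (x - x')) = |x j| / Real.sqrt (v ⬝ᵥ v) ∧
    (x j = 0 → x' = x) :=
  perturbation_solution_difference_formula_general A Ap h1 h4 c hc b hb j v hv hv0 Bp hb1 hb4 x x'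
    hx hx'
end
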